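/- arXiv:1507.06156 — 5 statements merged into one kernel-verified Lean document; each statement's English description precedes it below -/
import Mathlib

section
/- Let λ₁ < λ₂ < λ₃ < λ₄ be real numbers and set D := ∏_{i<j} (λⱼ − λᵢ). Then E₂ := (λ₄−λ₃)(λ₄−λ₂)²(λ₄−λ₁) + (λ₃−λ₄)(λ₃−λ₂)²(λ₃−λ₁) + (λ₁−λ₄)(λ₁−λ₃)(λ₁−λ₂)² is nonnegative; consequently I₂ := −(K₂²/D²)·E₂ ≤ 0 for any real number K₂. -/
theorem stmt_5 (l₁ l₂ l₃ l₄ K₂ : ℝ) (h12 : l₁ < l₂) (h23 : l₂ < l₃) (h34 : l₃ < l₄) :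
    let D := (l₂ - l₁) * (l₃ - l₁) * (l₄ - l₁) * (l₃ - l₂) * (l₄ - l₂) * (l₄ - l₃)
    let E₂ := (l₄ - l₃) * (l₄ - l₂) ^ 2 * (l₄ - l₁) +
      (l₃ - l₄) * (l₃ - l₂) ^ 2 * (l₃ - l₁) +
      (l₁ - l₄) * (l₁ - l₃) * (l₁ - l₂) ^ 2
    0 ≤ E₂ ∧ -(K₂ ^ 2 / D ^ 2) * E₂ ≤ 0 := by
  intro D E₂
  set a := l₂ - l₁ with ha
  set b := l₃ - l₂ with hb
  set c := l₄ - l₃ with hc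
  have ha' : 0 < a := by simp [ha]; linarith
  have hb' : 0 < b := by simp [hb]; linarith
  have hc' : 0 < c := by simp [hc]; linarith
  have hE : 0 ≤ E₂ := by
    have : E₂ = c^4 + 3*b*c^3 + 3*b^2*c^2 + a*c^3 + 2*a*b*c^2 + a^2*b*c + a^2*b^2
        + a^3*c + 2*a^3*b + a^4 := by
      simp only [E₂, ha, hb, hc]; ring
    rw [this]; positivity
  refine ⟨hE, ?_⟩
  have : 0 ≤ (K₂ ^ 2 / D ^ 2) * E₂ := mul_nonneg (div_nonneg (sq_nonneg _) (sq_nonneg _)) hE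
  linarith
end

section
/- Let λ₁ < λ₂ < λ₃ < λ₄ be real numbers. Then E₄ := (λ₃−λ₄)²(λ₃−λ₂)(λ₃−λ₁) + (λ₂−λ₄)²(λ₂−λ₃)(λ₂−λ₁) + (λ₁−λ₄)²(λ₁−λ₃)(λ₁−λ₂) ≥ 0. -/
theorem stmt_7 (l₁ l₂ l₃ l₄ : ℝ) (h12 : l₁ < l₂) (h23 : l₂ < l₃) (h34 : l₃ < l₄) :
    0 ≤ (l₃ - l₄) ^ 2 * (l₃ - l₂) * (l₃ - l₁) +
      (l₂ - l₄) ^ 2 * (l₂ - l₃) * (l₂ - l₁) +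
      (l₁ - l₄) ^ 2 * (l₁ - l₃) * (l₁ - l₂) := by
  set a := l₂ - l₁ with ha
  set b := l₃ - l₂ with hb
  set c := l₄ - l₃ with hc
  have ha' : 0 < a := sub_pos.2 h12
  have hb' : 0 < b := sub_pos.2 h23
  have hc' : 0 < c := sub_pos.2 h34
  have key : (l₃ - l₄) ^ 2 * (l₃ - l₂) * (l₃ - l₁) +
      (l₂ - l₄) ^ 2 * (l₂ - l₃) * (l₂ - l₁) +
      (l₁ - l₄) ^ 2 * (l₁ - l₃) * (l₁ - l₂) =
      a^4 + 3*a^3*b + 2*a^3*c + 3*a^2*b^2 + 4*a^2*b*c + a^2*c^2 + a*b*c^2 + b^2*c^2 := by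
    rw [ha, hb, hc]; ring
  rw [key]
  positivity
end

section
/- Let λ₁, λ₂, λ₃, λ₄ be pairwise distinct real numbers. Then the sum over unordered pairs {i,j} ⊆ {2,3,4} of 1/[(λ₁−λᵢ)(λ₁−λⱼ)·∏_{m≠i}(λₘ−λᵢ)·∏_{m≠j}(λₘ−λⱼ)] equals −(1/D²)·[(λ₄−λ₃)(λ₄−λ₂)(λ₄−λ₁)² + (λ₃−λ₄)(λ₃−λ₂)(λ₃−λ₁)² + (λ₂−λ₄)(λ₂−λ₃)(λ₂−λ₁)²], where D := ∏_{1≤i<j≤4} (λⱼ−λᵢ). -/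
/-! Multiplying the denominator of each summand by the factor attached to the complementary index
gives `-D²`, because together they contain every difference `λⱼ - λᵢ` exactly twice, with a single
sign flip. Hence each summand is `-(complementary factor) / D²`, and the three add up. -/

theorem one_div_eq_neg_div_sq_of_mul_eq {K : Type*} [Field K] {x c D : K} (hD : D ≠ 0)
    (h : x * c = -D ^ 2) : 1 / x = -c / D ^ 2 := by
  have hx : x ≠ 0 := left_ne_zero_of_mul (h ▸ neg_ne_zero.mpr (pow_ne_zero 2 hD))
  rw [div_eq_div_iff hx (pow_ne_zero 2 hD), ← neg_eq_iff_eq_neg.mpr h]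
  ring

theorem stmt_8 (l₁ l₂ l₃ l₄ : ℝ)
    (hd : l₁ ≠ l₂ ∧ l₁ ≠ l₃ ∧ l₁ ≠ l₄ ∧ l₂ ≠ l₃ ∧ l₂ ≠ l₄ ∧ l₃ ≠ l₄) :
    let P₂ := (l₁ - l₂) * (l₃ - l₂) * (l₄ - l₂)
    let P₃ := (l₁ - l₃) * (l₂ - l₃) * (l₄ - l₃)
    let P₄ := (l₁ - l₄) * (l₂ - l₄) * (l₃ - l₄)
    let D := (l₂ - l₁) * (l₃ - l₁) * (l₄ - l₁) * (l₃ - l₂) * (l₄ - l₂) * (l₄ - l₃)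
    1 / ((l₁ - l₂) * (l₁ - l₃) * P₂ * P₃) +
      1 / ((l₁ - l₂) * (l₁ - l₄) * P₂ * P₄) +
      1 / ((l₁ - l₃) * (l₁ - l₄) * P₃ * P₄) =
    -(1 / D ^ 2) * ((l₄ - l₃) * (l₄ - l₂) * (l₄ - l₁) ^ 2 +
      (l₃ - l₄) * (l₃ - l₂) * (l₃ - l₁) ^ 2 +
      (l₂ - l₄) * (l₂ - l₃) * (l₂ - l₁) ^ 2) := by
  intro P₂ P₃ P₄ D
  obtain ⟨h₁₂, h₁₃, h₁₄, h₂₃, h₂₄, h₃₄⟩ := hd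
  have hD : D ≠ 0 := by
    simp only [D, ne_eq, mul_eq_zero, sub_eq_zero, not_or]
    exact ⟨⟨⟨⟨⟨h₁₂.symm, h₁₃.symm⟩, h₁₄.symm⟩, h₂₃.symm⟩, h₂₄.symm⟩, h₃₄.symm⟩
  rw [one_div_eq_neg_div_sq_of_mul_eq hD (c := (l₄ - l₃) * (l₄ - l₂) * (l₄ - l₁) ^ 2) (by ring),
    one_div_eq_neg_div_sq_of_mul_eq hD (c := (l₃ - l₄) * (l₃ - l₂) * (l₃ - l₁) ^ 2) (by ring),
    one_div_eq_neg_div_sq_of_mul_eq hD (c := (l₂ - l₄) * (l₂ - l₃) * (l₂ - l₁) ^ 2) (by ring)]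
  ring
end

section
/- Let g ∈ {1,2,3,4,6}, θ₀ ∈ (0, π/g), and define λₖ := cot((k−1)π/g + θ₀) for k = 1,…,g. If multiplicities mₖ ≥ 1 satisfy m_{k} = m_{k+2} (indices mod g) and Σₖ mₖ λₖ = 0 with Σₖ mₖ = n, then Σₖ mₖ λₖ² = (g−1)n. -/
/-!
Since `m (k + 2) = m k`, the multiplicities are constant when `g` is odd, and take a value `a` on
even and `b` on odd indices when `g = 2h`; the curvatures then form one or two blocks of
equally spaced cotangents `cot (jπ/q + x)`, `j < q`. Logarithmic differentiation of
`sin (q x) = 2^(q-1) ∏ⱼ sin (jπ/q + x)` gives `∑ⱼ cot (jπ/q + x) = q cot (q x)`, and differentiating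
once more gives `∑ⱼ cot² (jπ/q + x) = q² cot² (q x) + q (q - 1)`.
For `g` odd, minimality forces `cot (g θ₀) = 0`, so `S = ∑ₖ mₖ λₖ² = m g (g - 1)`. For `g = 2h` the
block sums `E = h cot (h θ₀)` and `O = h cot (h θ₀ + π/2)` satisfy `E O = -h²`, so minimality
`a E + b O = 0` gives `a E² + b O² = (a + b) h²` and `S = (a + b) h (2h - 1) = (g - 1) n`.
-/

open Real Finset

theorem Complex.sin_nat_mul_eq_prod {q : ℕ} (hq : 0 < q) (z : ℂ) :
    Complex.sin (q * z) = 2 ^ (q - 1) * ∏ j ∈ range q, Complex.sin (j * Real.pi / q + z) := by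
  open Complex in
  have hprim : IsPrimitiveRoot (cexp (-(2 * Real.pi * I / q))) q := by
    rw [exp_neg]; exact (isPrimitiveRoot_exp q hq.ne').inv
  have hroots := congrArg (Polynomial.eval (cexp (z * I)))
    (X_pow_sub_C_eq_prod hprim hq (α := cexp (-z * I)) rfl)
  simp only [Polynomial.eval_sub, Polynomial.eval_pow, Polynomial.eval_X, Polynomial.eval_C,
    Polynomial.eval_prod] at hroots
  have two_I_sin (w : ℂ) : cexp (w * I) - cexp (-w * I) = 2 * I * sin w := by
    rw [mul_comm 2 I, mul_assoc, two_sin]; ring_nf; rw [I_sq]; ring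
  -- With `ζ = e^{-2πi/q}`, `e^{iz} - ζ^j e^{-iz}` is `2i sin (jπ/q + z)` up to the phase
  -- `e^{-ijπ/q}`; the phases multiply to `e^{-iπ(q-1)/2} = (-i)^(q-1)`.
  have factor (j : ℕ) : cexp (z * I) - cexp (-(2 * Real.pi * I / q)) ^ j * cexp (-z * I) =
      cexp (j * (-(Real.pi / q * I))) * (2 * I * sin (j * Real.pi / q + z)) := by
    have hq' : (q : ℂ) ≠ 0 := by exact_mod_cast hq.ne'
    rw [← two_I_sin, mul_sub, ← exp_add, ← exp_add, ← exp_nat_mul, ← exp_add]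
    congr 2 <;> field_simp <;> ring
  obtain ⟨p, rfl⟩ : ∃ p, q = p + 1 := ⟨q - 1, by omega⟩
  have gauss : (∑ j ∈ range (p + 1), (j : ℂ)) * (-(Real.pi / (p + 1 : ℕ) * I)) =
      p * (-(Real.pi / 2 * I)) := by
    have h := congrArg (Nat.cast : ℕ → ℂ) (sum_range_id_mul_two (p + 1))
    push_cast at h ⊢
    rw [show ∑ j ∈ range (p + 1), (j : ℂ) = (p + 1) * p / 2 by linear_combination h / 2]
    field_simp
  rw [Finset.prod_congr rfl (fun j _ => factor j), Finset.prod_mul_distrib, ← exp_sum,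
    ← Finset.sum_mul, gauss, exp_nat_mul, exp_neg, exp_pi_div_two_mul_I, Finset.prod_mul_distrib,
    Finset.prod_const, card_range, ← exp_nat_mul, ← exp_nat_mul] at hroots
  have hsin_mul : cexp ((p + 1 : ℕ) * (z * I)) - cexp ((p + 1 : ℕ) * (-z * I)) =
      2 * I * sin ((p + 1 : ℕ) * z) := by
    rw [← two_I_sin]; ring_nf
  apply mul_left_cancel₀ (mul_ne_zero two_ne_zero I_ne_zero : (2 * I : ℂ) ≠ 0)
  generalize ∏ j ∈ range (p + 1), sin (j * Real.pi / (p + 1 : ℕ) + z) = P at hroots ⊢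
  rw [← hsin_mul, hroots, pow_succ, mul_pow, inv_pow, Nat.add_sub_cancel]
  field_simp

theorem Real.sin_nat_mul_eq_prod {q : ℕ} (hq : 0 < q) (x : ℝ) :
    sin (q * x) = 2 ^ (q - 1) * ∏ j : Fin q, sin (j * π / q + x) := by
  rw [Fin.prod_univ_eq_prod_range (fun j : ℕ => sin (j * π / q + x))]
  exact_mod_cast Complex.sin_nat_mul_eq_prod hq x

theorem Real.sin_mul_pi_div_add_ne_zero {q : ℕ} {x : ℝ} (hx : sin (q * x) ≠ 0) (j : Fin q) :
    sin (j * π / q + x) ≠ 0 := by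
  have hq : 0 < q := Nat.pos_of_ne_zero (by rintro rfl; simp at hx)
  rw [sin_nat_mul_eq_prod hq] at hx
  exact prod_ne_zero_iff.mp (right_ne_zero_of_mul hx) j (mem_univ j)

theorem Real.hasDerivAt_cot {x : ℝ} (hx : sin x ≠ 0) :
    HasDerivAt cot (-(1 + cot x ^ 2)) x := by
  have h := (hasDerivAt_cos x).div (hasDerivAt_sin x) hx
  rw [show cos / sin = cot from funext fun y => (cot_eq_cos_div_sin y).symm] at h
  refine h.congr_deriv ?_
  rw [cot_eq_cos_div_sin]
  field_simp
  ring

theorem Real.cot_mul_cot_add_pi_div_two {x : ℝ} (hs : sin x ≠ 0) (hc : cos x ≠ 0) :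
    cot x * cot (x + π / 2) = -1 := by
  rw [cot_eq_cos_div_sin, cot_eq_cos_div_sin, sin_add_pi_div_two, cos_add_pi_div_two]
  field_simp

theorem Real.sum_cot_mul_pi_div_add {q : ℕ} {x : ℝ} (hx : sin (q * x) ≠ 0) :
    ∑ j : Fin q, cot (j * π / q + x) = q * cot (q * x) := by
  have hq : 0 < q := Nat.pos_of_ne_zero (by rintro rfl; simp at hx)
  have hprod : (fun y => sin (q * y)) = fun y => 2 ^ (q - 1) * ∏ j : Fin q, sin (j * π / q + y) :=
    funext (sin_nat_mul_eq_prod hq)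
  have hlog := congrArg (logDeriv · x) hprod
  have hlhs : logDeriv (fun y => sin (q * y)) x = q * cot (q * x) := by
    rw [show (fun y => sin (q * y)) = sin ∘ (fun y => q * y) from rfl,
      logDeriv_comp differentiableAt_sin (by fun_prop), logDeriv_sin]
    simp [mul_comm]
  have hfactor (j : Fin q) : logDeriv (fun y => sin (j * π / q + y)) x = cot (j * π / q + x) := by
    rw [show (fun y => sin (j * π / q + y)) = sin ∘ (fun y => j * π / q + y) from rfl,
      logDeriv_comp differentiableAt_sin (by fun_prop), logDeriv_sin]
    simp
  rw [hlhs, logDeriv_const_mul _ _ (by positivity),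
    logDeriv_prod (fun j _ => sin_mul_pi_div_add_ne_zero hx j) (fun _ _ => by fun_prop)] at hlog
  simp only [hfactor] at hlog
  exact hlog.symm

theorem Real.sum_cot_mul_pi_div_add_sq {q : ℕ} {x : ℝ} (hx : sin (q * x) ≠ 0) :
    ∑ j : Fin q, cot (j * π / q + x) ^ 2 = q ^ 2 * cot (q * x) ^ 2 + q * (q - 1) := by
  -- Differentiate `sum_cot_mul_pi_div_add`, valid on the open set `{y | sin (q y) ≠ 0}`.
  have hsum : (fun y => ∑ j : Fin q, cot (j * π / q + y)) =ᶠ[nhds x] fun y => q * cot (q * y) :=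
    Filter.eventually_of_mem
      ((isOpen_ne_fun (f := fun y => sin (q * y)) (by fun_prop) continuous_const).mem_nhds hx)
      fun _ hy => sum_cot_mul_pi_div_add hy
  have hlhs : HasDerivAt (fun y => ∑ j : Fin q, cot (j * π / q + y))
      (∑ j : Fin q, -(1 + cot (j * π / q + x) ^ 2)) x :=
    HasDerivAt.fun_sum fun j _ =>
      (hasDerivAt_cot (sin_mul_pi_div_add_ne_zero hx j)).comp_const_add _ _
  have hrhs : HasDerivAt (fun y => q * cot (q * y)) (q * (-(1 + cot (q * x) ^ 2) * (q * 1))) x :=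
    ((hasDerivAt_cot hx).comp x ((hasDerivAt_id x).const_mul _)).const_mul _
  have := hlhs.unique (hrhs.congr_of_eventuallyEq hsum)
  simp only [sum_neg_distrib, sum_add_distrib, sum_const, card_univ, Fintype.card_fin,
    nsmul_eq_mul, mul_one] at this
  linear_combination -this

theorem Fin.sum_univ_two_mul {M : Type*} [AddCommMonoid M] {h : ℕ} (f : Fin (2 * h) → M) :
    ∑ k, f k = ∑ j : Fin h, (f ⟨2 * j, by omega⟩ + f ⟨2 * j + 1, by omega⟩) := by
  rw [← (finProdFinEquiv.trans (finCongr (mul_comm h 2))).sum_comp, Fintype.sum_prod_type]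
  refine Finset.sum_congr rfl fun j _ => ?_
  rw [Fin.sum_univ_two]
  congr 2 <;> ext <;> simp [finProdFinEquiv, add_comm]

section Periodic

variable {α : Type*} {g : ℕ} {m : Fin g → α}

theorem apply_add_two_mul_mod
    (hper : ∀ k : Fin g, m ⟨((k : ℕ) + 2) % g, Nat.mod_lt _ k.pos⟩ = m k) (k : Fin g) (j : ℕ) :
    m ⟨(k + 2 * j) % g, Nat.mod_lt _ k.pos⟩ = m k := by
  induction j with
  | zero => simp [Nat.mod_eq_of_lt k.isLt]
  | succ j ih =>
    refine Eq.trans (congrArg m (Fin.ext ?_)) ((hper ⟨_, Nat.mod_lt _ k.pos⟩).trans ih)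
    simp only [Nat.mod_add_mod]
    ring_nf

theorem apply_eq_apply_zero_of_odd (hodd : Odd g)
    (hper : ∀ k : Fin g, m ⟨((k : ℕ) + 2) % g, Nat.mod_lt _ k.pos⟩ = m k) (k : Fin g) :
    m k = m ⟨0, hodd.pos⟩ := by
  obtain ⟨t, rfl⟩ := hodd
  rw [← apply_add_two_mul_mod hper ⟨0, by omega⟩ (k * (t + 1))]
  refine congrArg m (Fin.ext ?_)
  dsimp only
  rw [show 0 + 2 * (k * (t + 1)) = k + (2 * t + 1) * k by ring, Nat.add_mul_mod_self_left,
    Nat.mod_eq_of_lt k.isLt]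

end Periodic

theorem sum_mul_eq_of_periodic_two_mul {h : ℕ} (hh : 0 < h) {m : Fin (2 * h) → ℕ}
    (hper : ∀ k : Fin (2 * h), m ⟨((k : ℕ) + 2) % (2 * h), Nat.mod_lt _ k.pos⟩ = m k)
    (f : ℕ → ℝ) :
    ∑ k, (m k : ℝ) * f k =
      m ⟨0, by omega⟩ * ∑ j : Fin h, f (2 * j) + m ⟨1, by omega⟩ * ∑ j : Fin h, f (2 * j + 1) := by
  rw [Fin.sum_univ_two_mul, sum_add_distrib, mul_sum, mul_sum]
  congr 1 <;> refine sum_congr rfl fun j _ => ?_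
  · have hj := apply_add_two_mul_mod hper ⟨0, by omega⟩ j
    simp only [zero_add, Nat.mod_eq_of_lt (show 2 * (j : ℕ) < 2 * h by omega)] at hj
    rw [hj]
  · have hj := apply_add_two_mul_mod hper ⟨1, by omega⟩ j
    simp only [Nat.mod_eq_of_lt (show 2 * (j : ℕ) + 1 < 2 * h by omega), add_comm 1] at hj
    rw [hj]

theorem nat_mul_mem_Ioo_of_lt_pi_div {g : ℕ} {θ : ℝ} (hθ : 0 < θ ∧ θ < π / g) :
    0 < g ∧ 0 < g * θ ∧ g * θ < π := by
  have hg : 0 < g := Nat.pos_of_ne_zero fun hg => by simp [hg] at hθ; linarith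
  have hg' : (0 : ℝ) < g := by exact_mod_cast hg
  exact ⟨hg, mul_pos hg' hθ.1, by rw [← lt_div_iff₀' hg']; exact hθ.2⟩

section Munzner

variable {g : ℕ} {θ₀ : ℝ} {m : Fin g → ℕ}

theorem sum_mul_cot_sq_of_odd (hodd : Odd g) (hθ : 0 < θ₀ ∧ θ₀ < π / g)
    (hper : ∀ k : Fin g, m ⟨((k : ℕ) + 2) % g, Nat.mod_lt _ k.pos⟩ = m k)
    (hmin : ∑ k, (m k : ℝ) * cot (k * π / g + θ₀) = 0) :
    ∑ k, (m k : ℝ) * cot (k * π / g + θ₀) ^ 2 = (g - 1 : ℝ) * ∑ k, (m k : ℝ) := by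
  obtain ⟨-, hθg, hθg'⟩ := nat_mul_mem_Ioo_of_lt_pi_div hθ
  have hsin : sin (g * θ₀) ≠ 0 := (sin_pos_of_pos_of_lt_pi hθg hθg').ne'
  obtain ⟨a, ha⟩ : ∃ a, ∀ k, m k = a := ⟨_, apply_eq_apply_zero_of_odd hodd hper⟩
  simp only [ha, ← mul_sum, sum_const, card_univ, Fintype.card_fin, nsmul_eq_mul] at hmin ⊢
  rw [sum_cot_mul_pi_div_add hsin] at hmin
  rw [sum_cot_mul_pi_div_add_sq hsin]
  linear_combination (g * cot (g * θ₀)) * hmin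

theorem sum_mul_cot_sq_of_even (heven : Even g) (hθ : 0 < θ₀ ∧ θ₀ < π / g)
    (hper : ∀ k : Fin g, m ⟨((k : ℕ) + 2) % g, Nat.mod_lt _ k.pos⟩ = m k)
    (hmin : ∑ k, (m k : ℝ) * cot (k * π / g + θ₀) = 0) :
    ∑ k, (m k : ℝ) * cot (k * π / g + θ₀) ^ 2 = (g - 1 : ℝ) * ∑ k, (m k : ℝ) := by
  obtain ⟨h, rfl⟩ := even_iff_two_dvd.mp heven
  obtain ⟨hh, hθh, hθh'⟩ := nat_mul_mem_Ioo_of_lt_pi_div hθ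
  replace hh : 0 < h := by omega
  push_cast at hθh hθh'
  have hs : sin (h * θ₀) ≠ 0 := (sin_pos_of_pos_of_lt_pi (by linarith) (by linarith)).ne'
  have hc : cos (h * θ₀) ≠ 0 := (cos_pos_of_mem_Ioo ⟨by linarith, by linarith⟩).ne'
  have hshift : h * (π / (2 * h) + θ₀) = h * θ₀ + π / 2 := by field_simp; ring
  have hs' : sin (h * (π / (2 * h) + θ₀)) ≠ 0 := by rwa [hshift, sin_add_pi_div_two]
  have hcot : cot (h * θ₀) * cot (h * (π / (2 * h) + θ₀)) = -1 := by
    rw [hshift]; exact cot_mul_cot_add_pi_div_two hs hc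
  have harg_even (j : ℕ) : ((2 * j : ℕ) : ℝ) * π / (2 * h : ℕ) + θ₀ = j * π / h + θ₀ := by
    push_cast; field_simp
  have harg_odd (j : ℕ) :
      ((2 * j + 1 : ℕ) : ℝ) * π / (2 * h : ℕ) + θ₀ = j * π / h + (π / (2 * h) + θ₀) := by
    push_cast; field_simp; ring
  have hsum := sum_mul_eq_of_periodic_two_mul hh hper fun i => cot (i * π / (2 * h : ℕ) + θ₀)
  have hsum_sq := sum_mul_eq_of_periodic_two_mul hh hper fun i => cot (i * π / (2 * h : ℕ) + θ₀) ^ 2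
  have hcount := sum_mul_eq_of_periodic_two_mul hh hper fun _ => 1
  simp only [harg_even, harg_odd, sum_cot_mul_pi_div_add hs, sum_cot_mul_pi_div_add hs',
    sum_cot_mul_pi_div_add_sq hs, sum_cot_mul_pi_div_add_sq hs'] at hsum hsum_sq
  simp only [mul_one, sum_const, card_univ, Fintype.card_fin, nsmul_eq_mul] at hcount
  rw [hsum] at hmin
  rw [hsum_sq, hcount]
  push_cast
  linear_combination (h * (cot (h * θ₀) + cot (h * (π / (2 * h) + θ₀)))) * hmin
    - (m ⟨0, by omega⟩ + m ⟨1, by omega⟩ : ℝ) * h ^ 2 * hcot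

end Munzner

theorem stmt_12 (g n : ℕ) (hg : g = 1 ∨ g = 2 ∨ g = 3 ∨ g = 4 ∨ g = 6)
    (θ₀ : ℝ) (hθ : 0 < θ₀ ∧ θ₀ < Real.pi / g)
    (lam : Fin g → ℝ)
    (hlam : ∀ k : Fin g, lam k = Real.cot ((k : ℕ) * Real.pi / g + θ₀))
    (m : Fin g → ℕ)
    (hper : ∀ k : Fin g, m ⟨((k : ℕ) + 2) % g, Nat.mod_lt _ (by omega)⟩ = m k)
    (hmin : ∑ k, (m k : ℝ) * lam k = 0)
    (hn : ∑ k, m k = n) :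
    ∑ k, (m k : ℝ) * lam k ^ 2 = (g - 1 : ℝ) * n := by
  subst hn
  simp only [hlam] at hmin ⊢
  push_cast
  rcases Nat.even_or_odd g with heven | hodd
  · exact sum_mul_cot_sq_of_even heven hθ hper hmin
  · exact sum_mul_cot_sq_of_odd hodd hθ hper hmin
end

section
/- Let θ₀ ∈ (0, π/4) and define λₖ := cot((k−1)π/4 + θ₀) for k = 1,2,3,4. If λ₁ + λ₂ + λ₃ + λ₄ = 0, then θ₀ = π/8, and in that case λ₁² + λ₂² + λ₃² + λ₄² = 12. -/
theorem stmt_15 (θ₀ : ℝ) (hθ : 0 < θ₀ ∧ θ₀ < Real.pi / 4)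
    (lam : Fin 4 → ℝ)
    (hlam : ∀ k : Fin 4, lam k = Real.cot ((k : ℕ) * Real.pi / 4 + θ₀))
    (hmin : lam 0 + lam 1 + lam 2 + lam 3 = 0) :
    θ₀ = Real.pi / 8 ∧
      lam 0 ^ 2 + lam 1 ^ 2 + lam 2 ^ 2 + lam 3 ^ 2 = 12 := by
  obtain ⟨hθ0, hθ1⟩ := hθ
  have hpi := Real.pi_pos
  obtain ⟨s, hs⟩ : ∃ s, s = Real.sin θ₀ := ⟨_, rfl⟩
  obtain ⟨c, hc⟩ : ∃ c, c = Real.cos θ₀ := ⟨_, rfl⟩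
  have hpyth : s ^ 2 + c ^ 2 = 1 := by rw [hs, hc]; exact Real.sin_sq_add_cos_sq θ₀
  have hs0 : 0 < s := hs ▸ Real.sin_pos_of_pos_of_lt_pi hθ0 (by linarith)
  have hc0 : 0 < c := hc ▸ Real.cos_pos_of_mem_Ioo ⟨by linarith, by linarith⟩
  have hcos2 : Real.cos (2 * θ₀) = c ^ 2 - s ^ 2 := by
    rw [hs, hc]; exact Real.cos_two_mul' θ₀
  have hsin2 : Real.sin (2 * θ₀) = 2 * s * c := by
    rw [hs, hc, Real.sin_two_mul]
  have hc2pos : 0 < Real.cos (2 * θ₀) :=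
    Real.cos_pos_of_mem_Ioo ⟨by linarith, by linarith⟩
  rw [hcos2] at hc2pos
  have hcs : s < c := by nlinarith
  have hsum : 0 < c + s := by linarith
  have hdiff : 0 < c - s := by linarith
  have hs0' : s ≠ 0 := ne_of_gt hs0
  have hc0' : c ≠ 0 := ne_of_gt hc0
  have hsum' : c + s ≠ 0 := ne_of_gt hsum
  have hdiff' : c - s ≠ 0 := ne_of_gt hdiff
  have hsqrt2 : (0:ℝ) < Real.sqrt 2 := by positivity
  -- express the four lam values
  have e0 : lam 0 = c / s := by
    have h := hlam 0
    simp only [Fin.isValue, Fin.val_zero, Nat.cast_zero, zero_mul, zero_div, zero_add] at h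
    rw [h, Real.cot_eq_cos_div_sin, ← hs, ← hc]
  have e1 : lam 1 = (c - s) / (c + s) := by
    have h := hlam 1
    have hv : ((1 : Fin 4) : ℕ) = 1 := rfl
    rw [hv] at h
    have hang : (1 : ℕ) * Real.pi / 4 + θ₀ = Real.pi / 4 + θ₀ := by push_cast; ring
    rw [hang] at h
    rw [h, Real.cot_eq_cos_div_sin, Real.cos_add, Real.sin_add,
      Real.cos_pi_div_four, Real.sin_pi_div_four, ← hs, ← hc]
    rw [div_eq_div_iff (ne_of_gt (by nlinarith [mul_pos (by positivity : (0:ℝ) < Real.sqrt 2 / 2) hsum])) hsum']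
    ring
  have e2 : lam 2 = (-s) / c := by
    have h := hlam 2
    have hv : ((2 : Fin 4) : ℕ) = 2 := rfl
    rw [hv] at h
    have hang : (2 : ℕ) * Real.pi / 4 + θ₀ = Real.pi / 2 + θ₀ := by push_cast; ring
    rw [hang] at h
    rw [h, Real.cot_eq_cos_div_sin, Real.cos_add, Real.sin_add,
      Real.cos_pi_div_two, Real.sin_pi_div_two, ← hs, ← hc]
    rw [div_eq_div_iff (ne_of_gt (by linarith : (0:ℝ) < 1 * c + 0 * s)) hc0']
    ring
  have e3 : lam 3 = (-(c + s)) / (c - s) := by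
    have h := hlam 3
    have hv : ((3 : Fin 4) : ℕ) = 3 := rfl
    rw [hv] at h
    have hang : (3 : ℕ) * Real.pi / 4 + θ₀ = (Real.pi - Real.pi / 4) + θ₀ := by
      push_cast; ring
    rw [hang] at h
    rw [h, Real.cot_eq_cos_div_sin, Real.cos_add, Real.sin_add,
      Real.cos_pi_sub, Real.sin_pi_sub, Real.cos_pi_div_four, Real.sin_pi_div_four, ← hs, ← hc]
    rw [div_eq_div_iff (ne_of_gt (by nlinarith [mul_pos (by positivity : (0:ℝ) < Real.sqrt 2 / 2) hdiff])) hdiff']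
    ring
  rw [e0, e1, e2, e3] at hmin
  field_simp at hmin
  -- derive (c²-s²)² = (2sc)²
  have hkey : (c ^ 2 - s ^ 2) ^ 2 = (2 * s * c) ^ 2 := by linear_combination hmin
  have h2 : c ^ 2 - s ^ 2 = 2 * s * c := by
    nlinarith [hkey, hc2pos, mul_pos hs0 hc0]
  -- θ₀ = π/8
  have hscpos : 0 < 2 * s * c := by positivity
  have htan : Real.tan (2 * θ₀) = Real.tan (Real.pi / 4) := by
    rw [Real.tan_pi_div_four, Real.tan_eq_sin_div_cos, hsin2, hcos2, h2]
    exact div_self (ne_of_gt hscpos)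
  have h2θ : 2 * θ₀ = Real.pi / 4 :=
    Real.injOn_tan ⟨by linarith, by linarith⟩ ⟨by linarith, by linarith⟩ htan
  refine ⟨by linarith, ?_⟩
  -- sum of squares
  have hsc : s ^ 2 * c ^ 2 = 1 / 8 := by
    linear_combination (c ^ 2 + s ^ 2 + 1) / 8 * hpyth - (c ^ 2 - s ^ 2 + 2 * s * c) / 8 * h2
  rw [e0, e1, e2, e3]
  have A : (c / s) ^ 2 + ((-s) / c) ^ 2 = 6 := by
    field_simp
    linear_combination (c ^ 2 + s ^ 2 + 1) * hpyth - 8 * hsc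
  have B : ((c - s) / (c + s)) ^ 2 + ((-(c + s)) / (c - s)) ^ 2 = 6 := by
    field_simp
    linear_combination (-4) * (c ^ 2 + s ^ 2 + 1) * hpyth + 32 * hsc
  linarith
end
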